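/- For every d ∈ ℕ there is no C² formula φ(x) with one free variable such that for every finite directed labelled graph G of dimension d and every node v of G: G ⊨ φ(v) if and only if the edge relation of G is a strict linear order. -/

import Mathlib

/-- The two variables of the logic `C²`. -/
inductive C2Var : Type
  | x : C2Var
  | y : C2Var
deriving DecidableEq

/-- Formulas of `C²`, the two-variable fragment of first-order logic with counting, over
the signature with one binary relation symbol `E` and unary predicates `P₁,…,P_d`.
`exN k v φ` is the counting quantifier `∃_k v. φ` ("at least `k` elements"). -/
inductive C2 (d : ℕ) : Type
  | eq : C2Var → C2Var → C2 d
  | edge : C2Var → C2Var → C2 d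
  | pred : Fin d → C2Var → C2 d
  | not : C2 d → C2 d
  | and : C2 d → C2 d → C2 d
  | or : C2 d → C2 d → C2 d
  | exN : ℕ → C2Var → C2 d → C2 d

/-- Satisfaction of a `C²` formula in a finite directed labelled graph `(V, E, lab)`
under an assignment `a` of the two variables. -/
def C2.sat {d : ℕ} {V : Type} [Fintype V] (E : V → V → Prop) (lab : V → Fin d → Bool) :
    C2 d → (C2Var → V) → Prop
  | .eq s t, a => a s = a t
  | .edge s t, a => E (a s) (a t)
  | .pred i s, a => lab (a s) i = true
  | .not φ, a => ¬ C2.sat E lab φ a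
  | .and φ ψ, a => C2.sat E lab φ a ∧ C2.sat E lab ψ a
  | .or φ ψ, a => C2.sat E lab φ a ∨ C2.sat E lab ψ a
  | .exN k w φ, a => k ≤ Nat.card {u : V | C2.sat E lab φ (Function.update a w u)}

/-- Quantifier nesting depth of a `C²` formula. -/
def C2.depth {d : ℕ} : C2 d → ℕ
  | .eq _ _ => 0
  | .edge _ _ => 0
  | .pred _ _ => 0
  | .not φ => φ.depth
  | .and φ ψ => max φ.depth ψ.depth
  | .or φ ψ => max φ.depth ψ.depth
  | .exN _ _ φ => φ.depth + 1

/-- Counting rank of a `C²` formula: the maximal `k` occurring in a counting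
quantifier `∃_k`. -/
def C2.rank {d : ℕ} : C2 d → ℕ
  | .eq _ _ => 0
  | .edge _ _ => 0
  | .pred _ _ => 0
  | .not φ => φ.rank
  | .and φ ψ => max φ.rank ψ.rank
  | .or φ ψ => max φ.rank ψ.rank
  | .exN k _ φ => max k φ.rank

/-- Free variables of a `C²` formula. -/
def C2.freeVars {d : ℕ} : C2 d → Finset C2Var
  | .eq s t => {s, t}
  | .edge s t => {s, t}
  | .pred _ s => {s}
  | .not φ => φ.freeVars
  | .and φ ψ => φ.freeVars ∪ ψ.freeVars
  | .or φ ψ => φ.freeVars ∪ ψ.freeVars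
  | .exN _ w φ => φ.freeVars.erase w

/-- A strict linear order on a type `V`: an irreflexive, transitive and total
binary relation. -/
def IsStrictLinearOrderRel {V : Type} (E : V → V → Prop) : Prop :=
  (∀ v, ¬ E v v) ∧ (∀ u v w, E u v → E v w → E u w) ∧ (∀ u v : V, u ≠ v → E u v ∨ E v u)

/-!
Let `A` be the linear order `0 < 1 < ⋯ < 4M` and `B` the tournament obtained from it by
reversing the single edge between `M` and `3M`, so that `B` is not transitive. For
`M = (r + 3) ^ m`, Duplicator wins the counting Ehrenfeucht–Fraïssé game on `A` and `B` from
`0` with `m` rounds and counting up to `r`, so no `C²` formula of depth `m` and rank `r`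
separates them.
With `j` rounds left and scale `c = (r + 3) ^ j`, each pebble is either on the same point in `A`
and `B` or at distance `≥ c` from both ends in both, and the atomic types agree. When a pebble
moves while the other one sits on `s` in `A` and `s'` in `B`, the points are sorted by their
distances to both ends and to the other pebble, each capped at the scale, and by the direction of
their edge with the other pebble (`zone`). All classes except the two far ones are singletons
that correspond in `A` and `B`; the reversed edge only moves one point from one far class to
the other, and both far classes have at least `r` points.
-/

open Function Finset

theorem min_sum_eq_of_forall_min_eq {ι : Type} {s : Finset ι} {f g : ι → ℕ} {r : ℕ}
    (h : ∀ i ∈ s, min (f i) r = min (g i) r) :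
    min (∑ i ∈ s, f i) r = min (∑ i ∈ s, g i) r := by
  classical
  induction s using Finset.induction_on with
  | empty => simp
  | insert i s hi ih =>
    rw [sum_insert hi, sum_insert hi]
    have hfi := h i (mem_insert_self i s)
    have hsum := ih fun j hj => h j (mem_insert_of_mem hj)
    omega

theorem Nat.card_eq_card_of_subsingleton {α β : Type} [Subsingleton α] [Subsingleton β]
    (h : Nonempty α ↔ Nonempty β) : Nat.card α = Nat.card β := by
  rcases isEmpty_or_nonempty α with hα | ⟨⟨a⟩⟩
  · have : IsEmpty β := not_nonempty_iff.1 fun hβ => hα.false (h.2 hβ).some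
    simp only [Nat.card_of_isEmpty]
  · rw [Nat.card_of_subsingleton a, Nat.card_of_subsingleton (h.1 ⟨a⟩).some]

theorem isStrictLinearOrderRel_lt {V : Type} [LinearOrder V] :
    IsStrictLinearOrderRel (· < · : V → V → Prop) :=
  ⟨lt_irrefl, fun _ _ _ => lt_trans, fun _ _ => lt_or_gt_of_ne⟩

section Classes

variable {V W ι : Type} [Fintype V] [Fintype W] {P : V → Prop} {Q : W → Prop} {r : ℕ}

theorem min_card_filter_class_eq [DecidableEq ι] [DecidablePred P] [DecidablePred Q]
    {cA : V → ι} {cB : W → ι} (hPQ : ∀ u u', cA u = cB u' → (P u ↔ Q u')) {i : ι}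
    (hcard : min #{u | cA u = i} r = min #{u' | cB u' = i} r) :
    min #{u | P u ∧ cA u = i} r = min #{u' | Q u' ∧ cB u' = i} r := by
  have hA : #{u | P u ∧ cA u = i} ≤ #{u | cA u = i} :=
    card_le_card (monotone_filter_right _ fun _ _ h => h.2)
  have hB : #{u' | Q u' ∧ cB u' = i} ≤ #{u' | cB u' = i} :=
    card_le_card (monotone_filter_right _ fun _ _ h => h.2)
  by_cases hboth : ∃ u u', cA u = i ∧ cB u' = i
  · obtain ⟨u₀, u₀', hu₀, hu₀'⟩ := hboth
    have hP (u) (hu : cA u = i) : P u ↔ Q u₀' := hPQ u u₀' (hu.trans hu₀'.symm)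
    have hQ (u') (hu' : cB u' = i) : Q u' ↔ Q u₀' :=
      (hPQ u₀ u' (hu₀.trans hu'.symm)).symm.trans (hP u₀ hu₀)
    by_cases hQ₀ : Q u₀'
    · have eA : #{u | P u ∧ cA u = i} = #{u | cA u = i} :=
        congrArg card (filter_congr fun u _ => ⟨And.right, fun h => ⟨(hP u h).2 hQ₀, h⟩⟩)
      have eB : #{u' | Q u' ∧ cB u' = i} = #{u' | cB u' = i} :=
        congrArg card <| filter_congr fun u' _ =>
          ⟨And.right, fun h => ⟨(hQ u' h).2 hQ₀, h⟩⟩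
      rwa [eA, eB]
    · have eA : #{u | P u ∧ cA u = i} = 0 := card_eq_zero.2 <| filter_eq_empty_iff.2
        fun ⦃u⦄ _ h => hQ₀ ((hP u h.2).1 h.1)
      have eB : #{u' | Q u' ∧ cB u' = i} = 0 := card_eq_zero.2 <| filter_eq_empty_iff.2
        fun ⦃u'⦄ _ h => hQ₀ ((hQ u' h.2).1 h.1)
      rw [eA, eB]
  · have hempty : #{u | cA u = i} = 0 ∨ #{u' | cB u' = i} = 0 := by
      by_contra! h
      obtain ⟨u, hu⟩ := card_pos.1 (Nat.pos_of_ne_zero h.1)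
      obtain ⟨u', hu'⟩ := card_pos.1 (Nat.pos_of_ne_zero h.2)
      exact hboth ⟨u, u', (mem_filter.1 hu).2, (mem_filter.1 hu').2⟩
    omega

theorem min_card_eq_of_classes (cA : V → ι) (cB : W → ι)
    (hPQ : ∀ u u', cA u = cB u' → (P u ↔ Q u'))
    (hcard : ∀ i, min (Nat.card {u // cA u = i}) r = min (Nat.card {u' // cB u' = i}) r) :
    min (Nat.card {u // P u}) r = min (Nat.card {u' // Q u'}) r := by
  classical
  simp only [Nat.card_eq_fintype_card, Fintype.card_subtype] at hcard ⊢
  set T := univ.image cA ∪ univ.image cB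
  rw [card_eq_sum_card_fiberwise (f := cA) (t := T) fun u _ => by simp [T],
    card_eq_sum_card_fiberwise (f := cB) (t := T) fun u _ => by simp [T]]
  refine min_sum_eq_of_forall_min_eq fun i _ => ?_
  simp only [filter_filter]
  exact min_card_filter_class_eq hPQ (hcard i)

end Classes

namespace C2

variable {d : ℕ} {V W : Type} (E : V → V → Prop) (lab : V → Fin d → Bool)
  (F : W → W → Prop) (lab' : W → Fin d → Bool)

def AtomicEquiv (a : C2Var → V) (b : C2Var → W) : Prop :=
  (∀ s, lab (a s) = lab' (b s)) ∧
    ∀ s t, (a s = a t ↔ b s = b t) ∧ (E (a s) (a t) ↔ F (b s) (b t))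

structure IsCountingBackAndForth (r : ℕ) (I : ℕ → (C2Var → V) → (C2Var → W) → Prop) :
    Prop where
  atomicEquiv : ∀ {j a b}, I j a b → AtomicEquiv E lab F lab' a b
  extend : ∀ {j a b}, I (j + 1) a b → ∀ w, ∃ (ι : Type) (cA : V → ι) (cB : W → ι),
    (∀ u u', cA u = cB u' → I j (update a w u) (update b w u')) ∧
      ∀ i, min (Nat.card {u // cA u = i}) r = min (Nat.card {u' // cB u' = i}) r

variable {E lab F lab'}

theorem atomicEquiv_of_irrefl {a : C2Var → V} {b : C2Var → W} (hE : ∀ v, ¬ E v v)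
    (hF : ∀ v, ¬ F v v) (hlab : ∀ s, lab (a s) = lab' (b s))
    (heq : a .x = a .y ↔ b .x = b .y) (hxy : E (a .x) (a .y) ↔ F (b .x) (b .y))
    (hyx : E (a .y) (a .x) ↔ F (b .y) (b .x)) : AtomicEquiv E lab F lab' a b := by
  refine ⟨hlab, fun s t => ?_⟩
  cases s <;> cases t <;> simp only [hE, hF, heq, hxy, hyx, eq_comm, iff_self, and_self]

theorem sat_iff_of_isCountingBackAndForth [Fintype V] [Fintype W] {r : ℕ}
    {I : ℕ → (C2Var → V) → (C2Var → W) → Prop}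
    (hI : IsCountingBackAndForth E lab F lab' r I) (φ : C2 d) {j : ℕ} {a : C2Var → V}
    {b : C2Var → W} (hab : I j a b) (hdepth : φ.depth ≤ j) (hrank : φ.rank ≤ r) :
    φ.sat E lab a ↔ φ.sat F lab' b := by
  induction φ generalizing j a b with
  | eq s t => exact ((hI.atomicEquiv hab).2 s t).1
  | edge s t => exact ((hI.atomicEquiv hab).2 s t).2
  | pred i s => simp only [sat, (hI.atomicEquiv hab).1 s]
  | not φ ih => exact not_congr (ih hab hdepth hrank)
  | and φ ψ ihφ ihψ =>
    simp only [depth, rank, sup_le_iff] at hdepth hrank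
    exact and_congr (ihφ hab hdepth.1 hrank.1) (ihψ hab hdepth.2 hrank.2)
  | or φ ψ ihφ ihψ =>
    simp only [depth, rank, sup_le_iff] at hdepth hrank
    exact or_congr (ihφ hab hdepth.1 hrank.1) (ihψ hab hdepth.2 hrank.2)
  | exN k w φ ih =>
    simp only [depth, rank, sup_le_iff] at hdepth hrank
    obtain ⟨j, rfl⟩ : ∃ j', j = j' + 1 := ⟨j - 1, by omega⟩
    obtain ⟨ι, cA, cB, hclass, hcard⟩ := hI.extend hab w
    have := min_card_eq_of_classes cA cB
      (fun u u' h => ih (hclass u u' h) (by omega) hrank.2) hcard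
    simp only [sat, Set.coe_ofPred]
    omega

end C2

namespace FinLine

open Set

section Zone

variable {n c : ℕ} {E F : Fin (n + 1) → Fin (n + 1) → Prop} {s s' u u' v : Fin (n + 1)}

def IsFar (c : ℕ) (u : Fin (n + 1)) : Prop := c ≤ u.val ∧ u.val + c ≤ n

def Similar (c : ℕ) (u u' : Fin (n + 1)) : Prop := u = u' ∨ IsFar c u ∧ IsFar c u'

theorem Similar.mono {c' : ℕ} (hc : c ≤ c') (h : Similar c' u u') : Similar c u u' := by
  unfold Similar IsFar at *
  omega

def zone (E : Fin (n + 1) → Fin (n + 1) → Prop) (c : ℕ) (s u : Fin (n + 1)) :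
    ℕ × ℕ × ℕ × Prop :=
  (min u.val c, min (n - u.val) c, min (u.val.dist s.val) (c + 1), E s u)

def farZone (c : ℕ) (dir : Prop) : ℕ × ℕ × ℕ × Prop := (c, c, c + 1, dir)

theorem zone_eq_zone_iff :
    zone E c s u = zone F c s' u' ↔ min u.val c = min u'.val c ∧
      min (n - u.val) c = min (n - u'.val) c ∧
      min (u.val.dist s.val) (c + 1) = min (u'.val.dist s'.val) (c + 1) ∧
      (E s u ↔ F s' u') := by
  simp only [zone, Prod.mk.injEq, eq_iff_iff]

theorem zone_eq_farZone_iff {dir : Prop} :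
    zone E c s u = farZone c dir ↔ IsFar c u ∧ c < u.val.dist s.val ∧ (E s u ↔ dir) := by
  have := u.isLt
  simp only [zone, farZone, Prod.mk.injEq, eq_iff_iff, IsFar, Nat.dist, and_assoc]
  exact and_congr (by omega) (and_congr (by omega) (and_congr (by omega) Iff.rfl))

theorem zone_mem_range_farZone_iff :
    zone E c s u ∈ range (farZone c) ↔ IsFar c u ∧ c < u.val.dist s.val :=
  ⟨fun ⟨_, h⟩ => (zone_eq_farZone_iff.1 h.symm).imp_right And.left,
    fun h => ⟨E s u, (zone_eq_farZone_iff.2 ⟨h.1, h.2, Iff.rfl⟩).symm⟩⟩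

theorem eq_of_zone_lt_eq (h : zone (· < ·) c s u = zone (· < ·) c s v)
    (hu : zone (· < ·) c s u ∉ range (farZone c)) : u = v := by
  rw [zone_mem_range_farZone_iff, IsFar] at hu
  rw [zone_eq_zone_iff] at h
  simp only [Nat.dist, Fin.lt_def] at hu h
  have := u.isLt
  have := v.isLt
  rw [Fin.ext_iff]
  omega

theorem exists_zone_lt_eq (hs : IsFar (2 * c) s) (hs' : IsFar (2 * c) s')
    (hu : zone (· < ·) c s u ∉ range (farZone c)) :
    ∃ u', zone (· < ·) c s' u' = zone (· < ·) c s u := by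
  rw [zone_mem_range_farZone_iff, IsFar, Nat.dist] at hu
  unfold IsFar at hs hs'
  have := u.isLt
  by_cases hend : u.val < c ∨ n < u.val + c
  · exact ⟨u, zone_eq_zone_iff.2 (by simp only [Fin.lt_def, Nat.dist, true_and]; omega)⟩
  · exact ⟨⟨s'.val + u.val - s.val, by omega⟩,
      zone_eq_zone_iff.2 (by simp only [Fin.lt_def, Nat.dist]; omega)⟩

theorem card_zone_lt_eq (hs : IsFar (2 * c) s) (hs' : IsFar (2 * c) s')
    {i : ℕ × ℕ × ℕ × Prop} (hi : i ∉ range (farZone c)) :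
    Nat.card {u // zone (· < ·) c s u = i} = Nat.card {u // zone (· < ·) c s' u = i} := by
  have (t : Fin (n + 1)) : Subsingleton {u // zone (· < ·) c t u = i} :=
    ⟨fun ⟨u, hu⟩ ⟨v, hv⟩ =>
      Subtype.ext (eq_of_zone_lt_eq (hu.trans hv.symm) (hu ▸ hi))⟩
  refine Nat.card_eq_card_of_subsingleton ⟨fun ⟨u, hu⟩ => ?_, fun ⟨u, hu⟩ => ?_⟩
  · obtain ⟨u', hu'⟩ := exists_zone_lt_eq hs hs' (hu ▸ hi)
    exact ⟨u', hu'.trans hu⟩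
  · obtain ⟨u', hu'⟩ := exists_zone_lt_eq hs' hs (hu ▸ hi)
    exact ⟨u', hu'.trans hu⟩

theorem le_card_zone_eq_farZone_false {r : ℕ} (hs : 2 * c + r ≤ s.val)
    (hE : ∀ u : Fin (n + 1), u.val < c + r → ¬ E s u) :
    r ≤ Nat.card {u // zone E c s u = farZone c False} := by
  have hmem (k : Fin r) : zone E c s ⟨c + k, by omega⟩ = farZone c False :=
    zone_eq_farZone_iff.2 ⟨by unfold IsFar; simp only; omega, by simp only [Nat.dist]; omega,
      iff_false_intro (hE _ (by simp only; omega))⟩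
  have := Nat.card_le_card_of_injective (β := {u // zone E c s u = farZone c False})
    (fun k => ⟨_, hmem k⟩) fun k l h => by simpa [Fin.ext_iff] using h
  simpa using this

theorem le_card_zone_eq_farZone_true {r : ℕ} (hs : s.val + 2 * c + r ≤ n)
    (hE : ∀ u : Fin (n + 1), n < u.val + c + r → E s u) :
    r ≤ Nat.card {u // zone E c s u = farZone c True} := by
  have hmem (k : Fin r) : zone E c s ⟨n - c - k, by omega⟩ = farZone c True :=
    zone_eq_farZone_iff.2 ⟨by unfold IsFar; simp only; omega, by simp only [Nat.dist]; omega,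
      iff_true_intro (hE _ (by simp only; omega))⟩
  have := Nat.card_le_card_of_injective (β := {u // zone E c s u = farZone c True})
    (fun k => ⟨_, hmem k⟩) fun k l h => by simp [Fin.ext_iff] at h; omega
  simpa using this

end Zone

section Flipped

variable {M c : ℕ} {s s' u u' : Fin (4 * M + 1)}

def flippedLt (M : ℕ) (u v : Fin (4 * M + 1)) : Prop :=
  (u < v ∧ ¬(u.val = M ∧ v.val = 3 * M)) ∨ (u.val = 3 * M ∧ v.val = M)

theorem flippedLt_irrefl (hM : 1 ≤ M) (v : Fin (4 * M + 1)) : ¬ flippedLt M v v := by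
  simp only [flippedLt, lt_irrefl, false_and, false_or]
  omega

theorem not_isStrictLinearOrderRel_flippedLt (hM : 1 ≤ M) :
    ¬ IsStrictLinearOrderRel (flippedLt M) := by
  rintro ⟨-, htrans, -⟩
  have := htrans ⟨3 * M, by omega⟩ ⟨M, by omega⟩ ⟨M + 1, by omega⟩
  simp only [flippedLt, Fin.lt_def, true_and, or_true, true_implies] at this
  omega

theorem zone_flippedLt_eq_iff (hc : 1 ≤ c) (hcM : c ≤ M) {i : ℕ × ℕ × ℕ × Prop}
    (hi : i ∉ range (farZone c)) : zone (flippedLt M) c s u = i ↔ zone (· < ·) c s u = i := by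
  by_cases hflip : s.val = M ∧ u.val = 3 * M ∨ s.val = 3 * M ∧ u.val = M
  · have hfar (E : Fin (4 * M + 1) → Fin (4 * M + 1) → Prop) :
        zone E c s u ∈ range (farZone c) :=
      zone_mem_range_farZone_iff.2 ⟨by unfold IsFar; omega, by unfold Nat.dist; omega⟩
    exact iff_of_false (fun h => hi (h ▸ hfar _)) (fun h => hi (h ▸ hfar _))
  · suffices flippedLt M s u ↔ s < u by simp only [zone, eq_iff_iff.2 this]
    unfold flippedLt
    omega

theorem zone_flippedLt_of_ne (hs : s.val ≠ M ∧ s.val ≠ 3 * M) :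
    zone (flippedLt M) c s = zone (· < ·) c s := by
  funext u
  suffices flippedLt M s u ↔ s < u by simp only [zone, eq_iff_iff.2 this]
  unfold flippedLt
  omega

theorem min_card_zone_eq {r : ℕ} (hc : 1 ≤ c) (hcM : (r + 3) * c ≤ M)
    (hs : Similar ((r + 3) * c) s s') (i : ℕ × ℕ × ℕ × Prop) :
    min (Nat.card {u // zone (· < ·) c s u = i}) r =
      min (Nat.card {u // zone (flippedLt M) c s' u = i}) r := by
  have hrc : r + 2 * c ≤ (r + 3) * c := by nlinarith
  obtain ⟨hss, hsM⟩ | ⟨hfar, hfar'⟩ : s.val = s'.val ∧ s.val ≠ M ∧ s.val ≠ 3 * M ∨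
      IsFar ((r + 3) * c) s ∧ IsFar ((r + 3) * c) s' := by
    simp only [Similar, IsFar, Fin.ext_iff] at hs ⊢
    omega
  · rw [← Fin.ext hss, zone_flippedLt_of_ne hsM]
  unfold IsFar at hfar hfar'
  by_cases hi : i ∈ range (farZone c)
  · obtain ⟨dir, rfl⟩ := hi
    suffices r ≤ Nat.card {u // zone (· < ·) c s u = farZone c dir} ∧
        r ≤ Nat.card {u // zone (flippedLt M) c s' u = farZone c dir} by omega
    by_cases hdir : dir
    · rw [eq_true hdir]
      refine ⟨le_card_zone_eq_farZone_true (by omega) fun u hu => ?_,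
        le_card_zone_eq_farZone_true (by omega) fun u hu => ?_⟩
      · rw [Fin.lt_def]
        omega
      · unfold flippedLt
        omega
    · rw [eq_false hdir]
      refine ⟨le_card_zone_eq_farZone_false (by omega) fun u hu => ?_,
        le_card_zone_eq_farZone_false (by omega) fun u hu => ?_⟩
      · rw [Fin.lt_def]
        omega
      · unfold flippedLt
        omega
  · rw [card_zone_lt_eq (s' := s') ⟨by omega, by omega⟩ ⟨by omega, by omega⟩ hi,
      Nat.card_congr (Equiv.subtypeEquivRight fun u => zone_flippedLt_eq_iff hc (by omega) hi)]

theorem similar_and_edge_iff_of_zone_eq (h : zone (· < ·) c s u = zone (flippedLt M) c s' u') :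
    Similar c u u' ∧ (s = u ↔ s' = u') ∧ (s < u ↔ flippedLt M s' u') ∧
      (u < s ↔ flippedLt M u' s') := by
  obtain ⟨hmin, hmin', hdist, hdir⟩ := zone_eq_zone_iff.1 h
  have := u.isLt
  have := u'.isLt
  simp only [Nat.dist] at hdist
  have hsim : Similar c u u' := by
    simp only [Similar, IsFar, Fin.ext_iff]
    omega
  have heq : s = u ↔ s' = u' := by
    simp only [Fin.ext_iff]
    omega
  refine ⟨hsim, heq, hdir, ?_⟩
  simp only [flippedLt, Fin.lt_def, Fin.ext_iff] at hdir heq ⊢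
  omega

end Flipped

def GameInv (d M r j : ℕ) (a b : C2Var → Fin (4 * M + 1)) : Prop :=
  (r + 3) ^ j ≤ M ∧ (∀ w, Similar ((r + 3) ^ j) (a w) (b w)) ∧
    C2.AtomicEquiv (· < ·) (fun _ (_ : Fin d) => false) (flippedLt M) (fun _ _ => false) a b

theorem gameInv_const_zero {d M r j : ℕ} (hM : 1 ≤ M) (hj : (r + 3) ^ j ≤ M) :
    GameInv d M r j (fun _ => 0) (fun _ => 0) :=
  ⟨hj, fun _ => Or.inl rfl, C2.atomicEquiv_of_irrefl lt_irrefl (flippedLt_irrefl hM)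
    (fun _ => rfl) Iff.rfl (iff_of_false (lt_irrefl _) (flippedLt_irrefl hM _))
    (iff_of_false (lt_irrefl _) (flippedLt_irrefl hM _))⟩

theorem gameInv_update {d M r j : ℕ} {a b : C2Var → Fin (4 * M + 1)}
    (hab : GameInv d M r (j + 1) a b) {v w : C2Var} (hvw : v ≠ w) {u u' : Fin (4 * M + 1)}
    (h : zone (· < ·) ((r + 3) ^ j) (a v) u = zone (flippedLt M) ((r + 3) ^ j) (b v) u') :
    GameInv d M r j (update a w u) (update b w u') := by
  obtain ⟨hM, hsim, -⟩ := hab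
  have hM1 : 1 ≤ M := le_trans (Nat.one_le_pow _ _ (by omega)) hM
  have hpow : (r + 3) ^ j ≤ (r + 3) ^ (j + 1) := Nat.pow_le_pow_right (by omega) j.le_succ
  obtain ⟨hsimu, heq, hlt, hgt⟩ := similar_and_edge_iff_of_zone_eq h
  have hsimv := (hsim v).mono hpow
  cases v <;> cases w <;> try exact absurd rfl hvw
  all_goals
    refine ⟨hpow.trans hM, fun t => ?_, C2.atomicEquiv_of_irrefl lt_irrefl (flippedLt_irrefl hM1)
      (fun _ => rfl) ?_ ?_ ?_⟩
    all_goals (try cases t) <;> simp only [update_self, ne_eq, reduceCtorEq, not_false_eq_true,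
      update_of_ne] <;> first | assumption | exact eq_comm.trans (heq.trans eq_comm)

theorem isCountingBackAndForth_gameInv (d M r : ℕ) :
    C2.IsCountingBackAndForth (· < ·) (fun _ (_ : Fin d) => false) (flippedLt M)
      (fun _ _ => false) r (GameInv d M r) where
  atomicEquiv h := h.2.2
  extend := by
    rintro j a b hab w
    obtain ⟨v, hvw⟩ : ∃ v : C2Var, v ≠ w := by
      cases w
      exacts [⟨.y, by decide⟩, ⟨.x, by decide⟩]
    have hc : 1 ≤ (r + 3) ^ j := Nat.one_le_pow _ _ (by omega)
    have hcM : (r + 3) * (r + 3) ^ j ≤ M := by rw [← pow_succ']; exact hab.1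
    have hsim : Similar ((r + 3) * (r + 3) ^ j) (a v) (b v) := by
      rw [← pow_succ']
      exact hab.2.1 v
    exact ⟨_, zone (· < ·) ((r + 3) ^ j) (a v), zone (flippedLt M) ((r + 3) ^ j) (b v),
      fun u u' h => gameInv_update hab hvw h, min_card_zone_eq hc hcM hsim⟩

end FinLine

/-- for no `d` is there a `C²` formula `φ(x)` with one free variable `x` such
that, over all finite directed labelled graphs of dimension `d`, `φ` holds at a node iff
the edge relation of the graph is a strict linear order. -/
theorem stmt6 (d : ℕ) :
    ¬ ∃ φ : C2 d, φ.freeVars = {C2Var.x} ∧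
      ∀ (V : Type) [Fintype V] (E : V → V → Prop), (∀ v, ¬ E v v) →
        ∀ (lab : V → Fin d → Bool) (v : V),
          (C2.sat E lab φ (fun _ => v) ↔ IsStrictLinearOrderRel E) := by
  rintro ⟨φ, -, hφ⟩
  set M := (φ.rank + 3) ^ φ.depth
  have hM : 1 ≤ M := Nat.one_le_pow _ _ (by omega)
  have hA : C2.sat (· < ·) (fun _ _ => false) φ (fun _ => (0 : Fin (4 * M + 1))) :=
    (hφ _ _ lt_irrefl _ 0).2 isStrictLinearOrderRel_lt
  have hB : C2.sat (FinLine.flippedLt M) (fun _ _ => false) φ (fun _ => 0) :=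
    (C2.sat_iff_of_isCountingBackAndForth (FinLine.isCountingBackAndForth_gameInv d M φ.rank) φ
      (FinLine.gameInv_const_zero hM le_rfl) le_rfl le_rfl).1 hA
  exact FinLine.not_isStrictLinearOrderRel_flippedLt hM
    ((hφ _ _ (FinLine.flippedLt_irrefl hM) _ 0).1 hB)
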